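/- Let X be a simplicial set and let c be a k-sphere in X (k ≥ 1) with all faces c_0, …, c_k degenerate. Let r be the minimal value of dgn(c_i) over 0 ≤ i ≤ k and let m be the smallest ordinal with dgn(c_m) = r. If an ordinal j reduces c_m, then j ≥ m and m properly reduces c_{j+1}. -/

import Mathlib

open CategoryTheory Simplicial

namespace AufhebungSSet

/-- An `n`-simplex `x` of a simplicial set `X` is degenerate if it is the image of a
simplex of strictly smaller dimension under the action of an epimorphism of `Δ`. -/
def IsDegen (X : SSet) {n : ℕ} (x : X _⦋n⦌) : Prop :=
  ∃ m : ℕ, m < n ∧ ∃ ε : (⦋n⦌ : SimplexCategory) ⟶ ⦋m⦌,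
    Function.Surjective ε.toOrderHom ∧ ∃ y : X _⦋m⦌, x = X.map ε.op y

/-- The degeneracy `dgn x = n - k`, where `k` is the least dimension from which `x`
is the image of a simplex under the action of an epimorphism; by the Eilenberg–Zilber
lemma this is the dimension of the nondegenerate simplex of which `x` is a degeneracy. -/
noncomputable def dgn (X : SSet) {n : ℕ} (x : X _⦋n⦌) : ℕ :=
  n - sInf (setOf fun k : ℕ => ∃ ε : (⦋n⦌ : SimplexCategory) ⟶ ⦋k⦌,
    Function.Surjective ε.toOrderHom ∧ ∃ y : X _⦋k⦌, x = X.map ε.op y)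

/-- `i` reduces `x` when `dgn (x δᵢ) = dgn x - 1`. -/
def Reduces (X : SSet) {n : ℕ} (i : Fin (n + 2)) (x : X _⦋n + 1⦌) : Prop :=
  dgn X (X.map (SimplexCategory.δ i).op x) + 1 = dgn X x

/-- `i` properly reduces `x` when `x = x δᵢ σᵢ`. -/
def ProperlyReduces (X : SSet) {n : ℕ} (i : Fin (n + 1)) (x : X _⦋n + 1⦌) : Prop :=
  x = X.map (SimplexCategory.σ i).op (X.map (SimplexCategory.δ i.castSucc).op x)

/-- A `(K+2)`-sphere: a family `c₀, …, c_{K+2}` of `(K+1)`-simplices satisfying the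
cycle equations `cⱼ δᵢ = cᵢ δ_{j-1}` for `i < j` (here reindexed: `c_{j+1} δᵢ = cᵢ δⱼ`
for `i ≤ j`). -/
def IsSphere (X : SSet) {K : ℕ} (c : Fin (K + 3) → X _⦋K + 1⦌) : Prop :=
  ∀ i j : Fin (K + 2), i ≤ j →
    X.map (SimplexCategory.δ i).op (c j.succ) = X.map (SimplexCategory.δ j).op (c i.castSucc)

/-- `y` fills the sphere `c` when `y δᵢ = cᵢ` for all `i`. -/
def IsFiller (X : SSet) {K : ℕ} (y : X _⦋K + 2⦌) (c : Fin (K + 3) → X _⦋K + 1⦌) : Prop :=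
  ∀ i : Fin (K + 3), X.map (SimplexCategory.δ i).op y = c i


/-! A reducing index `j < m` of `c_m` is impossible: the cycle equation turns the face `c_m δ_j`,
of degeneracy `r - 1`, into a face of `c_j`, which would then have degeneracy at most `r`. For
`m ≤ j`, the equation `c_{j+1} δ_m = c_m δ_j` shows that `m` reduces `c_{j+1}`. A reducing index
is adjacent to a properly reducing one `p`, and `p = m - 1` is excluded by the same minimality
argument applied to `c_{j+1} δ_{m-1} = c_{m-1} δ_j`. -/

open SimplexCategory

def epiDims (X : SSet) {n : ℕ} (x : X _⦋n⦌) : Set ℕ :=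
  Set.ofPred fun k : ℕ => ∃ ε : (⦋n⦌ : SimplexCategory) ⟶ ⦋k⦌,
    Function.Surjective ε.toOrderHom ∧ ∃ y : X _⦋k⦌, x = X.map ε.op y

noncomputable def nondegDim (X : SSet) {n : ℕ} (x : X _⦋n⦌) : ℕ :=
  sInf (epiDims X x)

section Degeneracy

variable (X : SSet)

lemma dgn_eq_sub_nondegDim {n : ℕ} (x : X _⦋n⦌) : dgn X x = n - nondegDim X x := rfl

lemma map_op_map_op {a b c : ℕ} (f : (⦋a⦌ : SimplexCategory) ⟶ ⦋b⦌)
    (g : (⦋b⦌ : SimplexCategory) ⟶ ⦋c⦌) (w : X _⦋c⦌) :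
    X.map f.op (X.map g.op w) = X.map (f ≫ g).op w := by
  rw [op_comp, X.map_comp]; rfl

lemma nondegDim_le {n k : ℕ} {x : X _⦋n⦌} (ε : (⦋n⦌ : SimplexCategory) ⟶ ⦋k⦌)
    (hε : Function.Surjective ε.toOrderHom) (y : X _⦋k⦌) (hx : x = X.map ε.op y) :
    nondegDim X x ≤ k :=
  Nat.sInf_le ⟨ε, hε, y, hx⟩

lemma nondegDim_le_self {n : ℕ} (x : X _⦋n⦌) : nondegDim X x ≤ n :=
  nondegDim_le X (𝟙 _) (fun b => ⟨b, rfl⟩) x (by simp)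

lemma exists_surjective_map_nondegDim {n : ℕ} (x : X _⦋n⦌) :
    ∃ ε : (⦋n⦌ : SimplexCategory) ⟶ ⦋nondegDim X x⦌,
      Function.Surjective ε.toOrderHom ∧ ∃ y, x = X.map ε.op y := by
  exact Nat.sInf_mem (s := epiDims X x) ⟨n, 𝟙 _, fun b => ⟨b, rfl⟩, x, by simp⟩

lemma nondegDim_map_le {a k : ℕ} (φ : (⦋a⦌ : SimplexCategory) ⟶ ⦋k⦌) (w : X _⦋k⦌) :
    nondegDim X (X.map φ.op w) ≤ k := by
  refine (nondegDim_le X (k := (Limits.image φ).len) (Limits.factorThruImage φ)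
    (epi_iff_surjective.mp inferInstance) (X.map (Limits.image.ι φ).op w) ?_).trans
    (len_le_of_mono (Limits.image.ι φ))
  rw [map_op_map_op, Limits.image.fac]

lemma nondegDim_map_le_nondegDim {a b : ℕ} (φ : (⦋a⦌ : SimplexCategory) ⟶ ⦋b⦌) (v : X _⦋b⦌) :
    nondegDim X (X.map φ.op v) ≤ nondegDim X v := by
  obtain ⟨ε, -, y, hv⟩ := exists_surjective_map_nondegDim X v
  have := nondegDim_map_le X (φ ≫ ε) y
  rwa [← map_op_map_op, ← hv] at this

lemma surjective_of_le_nondegDim_map {a k : ℕ} (φ : (⦋a⦌ : SimplexCategory) ⟶ ⦋k⦌) (w : X _⦋k⦌)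
    (h : k ≤ nondegDim X (X.map φ.op w)) : Function.Surjective φ.toOrderHom := by
  by_contra hφ
  cases k with
  | zero => exact hφ fun b => ⟨0, Subsingleton.elim (α := Fin 1) _ _⟩
  | succ k =>
    obtain ⟨i, θ, rfl⟩ := eq_comp_δ_of_not_surjective φ hφ
    rw [← map_op_map_op] at h
    have := nondegDim_map_le X θ (X.map (δ i).op w)
    omega

lemma dgn_le_dgn_map_δ_add_one {n : ℕ} (x : X _⦋n + 1⦌) (i : Fin (n + 2)) :
    dgn X x ≤ dgn X (X.map (δ i).op x) + 1 := by
  have := nondegDim_map_le_nondegDim X (δ i) x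
  rw [dgn_eq_sub_nondegDim, dgn_eq_sub_nondegDim]
  omega

lemma dgn_map_σ {n : ℕ} (z : X _⦋n⦌) (p : Fin (n + 1)) :
    dgn X (X.map (σ p).op z) = dgn X z + 1 := by
  have hle := nondegDim_map_le_nondegDim X (σ p) z
  have hge := nondegDim_map_le_nondegDim X (δ p.castSucc) (X.map (σ p).op z)
  rw [map_op_map_op, δ_comp_σ_self, op_id, Functor.map_id_apply] at hge
  have := nondegDim_le_self X z
  rw [dgn_eq_sub_nondegDim, dgn_eq_sub_nondegDim]
  omega

end Degeneracy

lemma exists_castSucc_eq_succ_of_monotone {α : Type*} [PartialOrder α] {n : ℕ}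
    {f : Fin (n + 2) → α} (hf : Monotone f) {s q : Fin (n + 2)} (hsq : s ≠ q) (h : f s = f q) :
    ∃ p : Fin (n + 1), f p.castSucc = f p.succ ∧ (q = p.castSucc ∨ q = p.succ) := by
  rcases hsq.lt_or_gt with hlt | hgt
  · have hq : q ≠ 0 := (hlt.trans_le' (Fin.zero_le s)).ne'
    refine ⟨q.pred hq, le_antisymm (hf (Fin.castSucc_le_succ _)) ?_, .inr (Fin.succ_pred q hq).symm⟩
    rw [Fin.succ_pred, ← h]
    exact hf ((Fin.le_castSucc_pred_iff hq).mpr hlt)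
  · have hq : q ≠ Fin.last _ := (hgt.trans_le (Fin.le_last s)).ne
    refine ⟨q.castPred hq, le_antisymm (hf (Fin.castSucc_le_succ _)) ?_,
      .inl (Fin.castSucc_castPred q hq).symm⟩
    rw [Fin.castSucc_castPred, ← h]
    exact hf ((Fin.succ_castPred_le_iff hq).mpr hgt)

section Reduction

variable {X : SSet}

lemma properlyReduces_map_σ {n : ℕ} (p : Fin (n + 1)) (w : X _⦋n⦌) :
    ProperlyReduces X p (X.map (σ p).op w) := by
  rw [ProperlyReduces, map_op_map_op, map_op_map_op, Category.assoc, δ_comp_σ_self,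
    Category.comp_id]

lemma ProperlyReduces.reduces {n : ℕ} {p : Fin (n + 1)} {x : X _⦋n + 1⦌}
    (h : ProperlyReduces X p x) : Reduces X p.castSucc x := by
  rw [Reduces, ← dgn_map_σ X _ p, ← h]

lemma properlyReduces_of_eq {n k : ℕ} (ε : (⦋n + 1⦌ : SimplexCategory) ⟶ ⦋k⦌) (y : X _⦋k⦌)
    {p : Fin (n + 1)} (hp : ε.toOrderHom p.castSucc = ε.toOrderHom p.succ) :
    ProperlyReduces X p (X.map ε.op y) := by
  obtain ⟨θ, rfl⟩ := eq_σ_comp_of_not_injective' ε p hp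
  rw [← map_op_map_op]
  exact properlyReduces_map_σ p _

end Reduction

lemma exists_properlyReduces_of_reduces {X : SSet} {n : ℕ} {x : X _⦋n + 1⦌} {q : Fin (n + 2)}
    (hq : Reduces X q x) :
    ∃ p : Fin (n + 1), ProperlyReduces X p x ∧ (q = p.castSucc ∨ q = p.succ) := by
  -- With `x = y ε` minimal, the face `x δ_q` keeps the nondegenerate dimension of `x`, so `ε δ_q`
  -- is onto: `ε` identifies `q` with another vertex, hence with a neighbour.
  obtain ⟨ε, -, y, hx⟩ := exists_surjective_map_nondegDim X x
  have hface : nondegDim X x ≤ nondegDim X (X.map (δ q).op (X.map ε.op y)) := by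
    have := nondegDim_map_le_nondegDim X (δ q) x
    have := nondegDim_le_self X (X.map (δ q).op x)
    rw [Reduces, dgn_eq_sub_nondegDim, dgn_eq_sub_nondegDim] at hq
    rw [← hx]
    omega
  obtain ⟨t, ht⟩ := surjective_of_le_nondegDim_map X (δ q ≫ ε) y
    (by rwa [← map_op_map_op]) (ε.toOrderHom q)
  obtain ⟨p, hp, hqp⟩ :=
    exists_castSucc_eq_succ_of_monotone ε.toOrderHom.monotone (Fin.succAbove_ne q t) ht
  exact ⟨p, hx ▸ properlyReduces_of_eq ε y hp, hqp⟩

/-- Since `c_{i'+1} δ_i = c_i δ_{i'}`, such a face bounds `dgn c_i` by `r`. -/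
lemma IsSphere.le_castSucc_of_dgn_face {X : SSet} {K : ℕ} {c : Fin (K + 3) → X _⦋K + 1⦌}
    (hc : IsSphere X c) {r : ℕ} (hr : ∀ u, r ≤ dgn X (c u)) {m : Fin (K + 3)}
    (hmmin : ∀ u, dgn X (c u) = r → m ≤ u) {i i' : Fin (K + 2)} (hii' : i ≤ i')
    (hface : dgn X (X.map (δ i).op (c i'.succ)) + 1 = r) : m ≤ i.castSucc := by
  refine hmmin _ (le_antisymm ?_ (hr _))
  rw [← hface, hc i i' hii']
  exact dgn_le_dgn_map_δ_add_one X _ i'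

theorem techlem_a_general (X : SSet) (K : ℕ) (c : Fin (K + 3) → X _⦋K + 1⦌) (hc : IsSphere X c)
    (r : ℕ) (hr : ∀ u : Fin (K + 3), r ≤ dgn X (c u))
    (m : Fin (K + 3)) (hm : dgn X (c m) = r)
    (hmmin : ∀ u : Fin (K + 3), dgn X (c u) = r → m ≤ u)
    (j : Fin (K + 2)) (hj : Reduces X j (c m)) :
    (m : ℕ) ≤ (j : ℕ) ∧
      ∃ h : (m : ℕ) < K + 1, ProperlyReduces X ⟨(m : ℕ), h⟩ (c j.succ) := by
  rw [Reduces, hm] at hj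
  have hmj : m ≤ j.castSucc := by
    by_contra! hjm
    obtain ⟨v, rfl⟩ := Fin.exists_succ_eq.mpr (hjm.trans_le' (Fin.zero_le _)).ne'
    exact hjm.not_ge (hc.le_castSucc_of_dgn_face hr hmmin (Fin.castSucc_lt_succ_iff.mp hjm) hj)
  obtain ⟨m, rfl⟩ := Fin.exists_castSucc_eq.mpr (hmj.trans_lt (Fin.castSucc_lt_last j)).ne
  rw [Fin.castSucc_le_castSucc_iff] at hmj
  have hface : dgn X (X.map (δ m).op (c j.succ)) + 1 = r := by rw [hc m j hmj, hj]
  have hred : Reduces X m (c j.succ) :=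
    hface.trans (le_antisymm (hr _) (hface ▸ dgn_le_dgn_map_δ_add_one X _ m))
  refine ⟨hmj, ?_⟩
  obtain ⟨p, hp, rfl | rfl⟩ := exists_properlyReduces_of_reduces hred
  · exact ⟨p.isLt, hp⟩
  · have := hc.le_castSucc_of_dgn_face hr hmmin (Fin.castSucc_lt_succ.le.trans hmj)
      (hp.reduces.trans (hred.symm.trans hface))
    exact absurd this (by simp)

/-- If all faces of a sphere `c` are degenerate, `r` is the minimal degeneracy,
`m` is the first face of degeneracy `r`, and `j` reduces `c_m`, then `j ≥ m` and `m`
properly reduces `c_{j+1}`. -/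
theorem techlem_a (X : SSet) (K : ℕ) (c : Fin (K + 3) → X _⦋K + 1⦌) (hc : IsSphere X c)
    (r : ℕ) (hr : ∀ u : Fin (K + 3), r ≤ dgn X (c u))
    (m : Fin (K + 3)) (hm : dgn X (c m) = r)
    (hmmin : ∀ u : Fin (K + 3), dgn X (c u) = r → m ≤ u)
    (hdeg : ∀ u : Fin (K + 3), IsDegen X (c u))
    (j : Fin (K + 2)) (hj : Reduces X j (c m)) :
    (m : ℕ) ≤ (j : ℕ) ∧
      ∃ h : (m : ℕ) < K + 1, ProperlyReduces X ⟨(m : ℕ), h⟩ (c j.succ) :=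
  techlem_a_general X K c hc r hr m hm hmmin j hj

end AufhebungSSet
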